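/- arXiv:1504.02953 — 3 statements merged into one kernel-verified Lean document; each statement's English description precedes it below -/
import Mathlib

section
/- There is a constant C such that for all ε ∈ (0,1] and all t ∈ ℝ with 0 < |t| ≤ 1, one has ∫_{‖x‖ ≤ 1} (|t|^{1/2} + ‖x‖ + ε)^{-3} (‖x‖ + ε)^{-1} dx ≤ C (|t|^{1/2} + ε)^{-1}, where the integral is over x ∈ ℝ³. Consequently ∫_{−ε²}^{1} ∫_{‖x‖≤1} (|t|^{1/2}+‖x‖+ε)^{-3} (‖x‖+ε)^{-1} dx dt ≤ C' for a universal constant C'. -/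
/-!
In polar coordinates the spatial integral, taken over all of `ℝ³`, becomes
`4π ∫₀^∞ r² (s + r + ε)⁻³ (r + ε)⁻¹ dr` with `s = |t|^{1/2}`. Since `r² ≤ (s + r + ε)(r + ε)`, the
integrand is at most `(s + ε + r)⁻²`, whose integral is `(s + ε)⁻¹`. Integrating this bound in
time, `(|t|^{1/2} + ε)⁻¹ ≤ ε⁻¹` on `[-ε², 0]` and `≤ t^{-1/2}` on `[0, 1]`, both of which have
bounded integrals.
-/

open MeasureTheory Metric Set Filter

lemma integral_Ioi_inv_add_sq {a : ℝ} (ha : 0 < a) :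
    IntegrableOn (fun r : ℝ => ((a + r) ^ 2)⁻¹) (Ioi 0) ∧
      ∫ r in Ioi (0 : ℝ), ((a + r) ^ 2)⁻¹ = a⁻¹ := by
  have hderiv : ∀ r ∈ Ici (0 : ℝ), HasDerivAt (fun r => -(a + r)⁻¹) ((a + r) ^ 2)⁻¹ r :=
    fun r (hr : 0 ≤ r) =>
      (((hasDerivAt_id r).const_add a).inv (by positivity)).neg.congr_deriv (by simp [neg_div])
  have hnonneg : ∀ r ∈ Ioi (0 : ℝ), 0 ≤ ((a + r) ^ 2)⁻¹ := fun r _ => by positivity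
  have hlim : Tendsto (fun r => -(a + r)⁻¹) atTop (nhds 0) := by
    simpa using (tendsto_atTop_add_const_left _ a tendsto_id).inv_tendsto_atTop.neg
  refine ⟨integrableOn_Ioi_deriv_of_nonneg' hderiv hnonneg hlim, ?_⟩
  simp [integral_Ioi_of_hasDerivAt_of_nonneg' hderiv hnonneg hlim]

lemma sq_mul_one_div_le {s ε r : ℝ} (hs : 0 ≤ s) (hε : 0 < ε) (hr : 0 ≤ r) :
    r ^ 2 * (1 / ((s + r + ε) ^ 3 * (r + ε))) ≤ ((s + ε + r) ^ 2)⁻¹ := by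
  have hmul : r ^ 2 ≤ (s + r + ε) * (r + ε) := by nlinarith
  rw [← div_eq_mul_one_div, div_le_iff₀ (by positivity), inv_mul_eq_div,
    le_div_iff₀ (by positivity)]
  calc r ^ 2 * (s + ε + r) ^ 2 ≤ (s + r + ε) * (r + ε) * (s + r + ε) ^ 2 := by
        rw [add_right_comm s ε r]; gcongr
    _ = _ := by ring

section Polar

variable {E : Type*} [NormedAddCommGroup E] [NormedSpace ℝ E] [FiniteDimensional ℝ E]
  [MeasurableSpace E] [BorelSpace E] (μ : Measure E) [μ.IsAddHaarMeasure]

lemma integrable_one_div_cube_mul_and_integral_le (hE : Module.finrank ℝ E = 3)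
    {s ε : ℝ} (hs : 0 ≤ s) (hε : 0 < ε) :
    Integrable (fun x : E => 1 / ((s + ‖x‖ + ε) ^ 3 * (‖x‖ + ε))) μ ∧
      ∫ x, 1 / ((s + ‖x‖ + ε) ^ 3 * (‖x‖ + ε)) ∂μ ≤ 3 * μ.real (ball 0 1) * (s + ε)⁻¹ := by
  have : Nontrivial E := Module.nontrivial_of_finrank_eq_succ hE
  set F : ℝ → ℝ := fun r => 1 / ((s + r + ε) ^ 3 * (r + ε))
  obtain ⟨hint, hval⟩ := integral_Ioi_inv_add_sq (a := s + ε) (by positivity)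
  have hF_nonneg : ∀ r ∈ Ioi (0 : ℝ), 0 ≤ r ^ 2 * F r := fun r (hr : 0 < r) => by
    simp only [F]; positivity
  have hF_le : ∀ r ∈ Ioi (0 : ℝ), r ^ 2 * F r ≤ ((s + ε + r) ^ 2)⁻¹ :=
    fun r (hr : 0 < r) => sq_mul_one_div_le hs hε hr.le
  have hF_int : IntegrableOn (fun r => r ^ 2 * F r) (Ioi 0) :=
    hint.mono' (by fun_prop) <| (ae_restrict_mem measurableSet_Ioi).mono fun r hr => by
      rw [Real.norm_of_nonneg (hF_nonneg r hr)]; exact hF_le r hr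
  have hpolar := integral_fun_norm_addHaar μ F
  simp only [hE, smul_eq_mul, nsmul_eq_mul] at hpolar
  refine ⟨(integrable_fun_norm_addHaar μ (f := F)).2 (by simpa [hE] using hF_int), ?_⟩
  calc ∫ x, F ‖x‖ ∂μ = 3 * μ.real (ball 0 1) * ∫ r in Ioi (0 : ℝ), r ^ 2 * F r := by
        rw [hpolar]; push_cast; ring
    _ ≤ 3 * μ.real (ball 0 1) * (s + ε)⁻¹ := by
        gcongr
        rw [← hval]
        exact setIntegral_mono_on hF_int hint measurableSet_Ioi hF_le

end Polar

lemma continuous_inv_sqrt_abs_add {ε : ℝ} (hε : 0 < ε) :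
    Continuous fun t : ℝ => (√|t| + ε)⁻¹ :=
  (by fun_prop : Continuous fun t : ℝ => √|t| + ε).inv₀ fun t => by positivity

lemma intervalIntegral_inv_sqrt_abs_add_le {ε : ℝ} (hε : 0 < ε) (hε1 : ε ≤ 1) :
    ∫ t in (-ε ^ 2)..1, (√|t| + ε)⁻¹ ≤ 3 := by
  have hint (a b : ℝ) : IntervalIntegrable (fun t : ℝ => (√|t| + ε)⁻¹) volume a b :=
    (continuous_inv_sqrt_abs_add hε).intervalIntegrable a b
  have hneg : ∫ t in (-ε ^ 2)..0, (√|t| + ε)⁻¹ ≤ 1 :=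
    calc _ ≤ ∫ _ in (-ε ^ 2)..0, ε⁻¹ :=
          intervalIntegral.integral_mono_on (neg_nonpos.2 (sq_nonneg ε)) (hint _ _) intervalIntegrable_const
            fun t _ => inv_anti₀ hε (le_add_of_nonneg_left (Real.sqrt_nonneg _))
      _ = ε := by simp [sq, hε.ne']
      _ ≤ 1 := hε1
  have hpos : ∫ t in (0 : ℝ)..1, (√|t| + ε)⁻¹ ≤ 2 :=
    calc _ ≤ ∫ t in (0 : ℝ)..1, t ^ (-(1 / 2) : ℝ) := by
          refine intervalIntegral.integral_mono_on_of_le_Ioo zero_le_one (hint _ _)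
            (intervalIntegral.intervalIntegrable_rpow' (by norm_num)) fun t ht => ?_
          rw [abs_of_pos ht.1, Real.rpow_neg ht.1.le, ← Real.sqrt_eq_rpow]
          exact inv_anti₀ (Real.sqrt_pos.2 ht.1) (le_add_of_nonneg_right hε.le)
      _ = 2 := by rw [integral_rpow (Or.inl (by norm_num))]; norm_num
  rw [← intervalIntegral.integral_add_adjacent_intervals (hint _ _) (hint _ _)]
  exact (add_le_add hneg hpos).trans (by norm_num)

/-- Spatial integral bound `∫_{‖x‖≤1} (|t|^{1/2}+‖x‖+ε)^{-3}(‖x‖+ε)^{-1} dx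
≤ C (|t|^{1/2}+ε)^{-1}`, and its consequence after integration in time. -/
theorem stmt8 :
    ∃ C : ℝ, 0 < C ∧
      ((∀ ε : ℝ, 0 < ε → ε ≤ 1 → ∀ t : ℝ, 0 < |t| → |t| ≤ 1 →
        (∫ x in Metric.closedBall (0 : EuclideanSpace ℝ (Fin 3)) 1,
            1 / ((Real.sqrt |t| + ‖x‖ + ε) ^ 3 * (‖x‖ + ε)))
          ≤ C * (Real.sqrt |t| + ε)⁻¹) ∧
      ∃ C' : ℝ, 0 < C' ∧ ∀ ε : ℝ, 0 < ε → ε ≤ 1 →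
        (∫ t in (-ε ^ 2)..1,
            (∫ x in Metric.closedBall (0 : EuclideanSpace ℝ (Fin 3)) 1,
              1 / ((Real.sqrt |t| + ‖x‖ + ε) ^ 3 * (‖x‖ + ε))))
          ≤ C') := by
  set V := (volume : Measure (EuclideanSpace ℝ (Fin 3))).real (ball 0 1)
  have hV : 0 < V := ENNReal.toReal_pos (measure_ball_pos _ _ one_pos).ne' measure_ball_lt_top.ne
  have hspatial (ε : ℝ) (hε : 0 < ε) (t : ℝ) :
      ∫ x in closedBall (0 : EuclideanSpace ℝ (Fin 3)) 1,
          1 / ((√|t| + ‖x‖ + ε) ^ 3 * (‖x‖ + ε)) ≤ 3 * V * (√|t| + ε)⁻¹ := by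
    obtain ⟨hint, hle⟩ := integrable_one_div_cube_mul_and_integral_le volume finrank_euclideanSpace_fin
      (Real.sqrt_nonneg |t|) hε
    exact (setIntegral_le_integral hint (.of_forall fun x => by positivity)).trans hle
  refine ⟨3 * V, by positivity, fun ε hε _ t _ _ => hspatial ε hε t, 9 * V, by positivity,
    fun ε hε hε1 => ?_⟩
  calc _ ≤ ∫ t in (-ε ^ 2)..1, 3 * V * (√|t| + ε)⁻¹ := by
        have hle : -ε ^ 2 ≤ 1 := (neg_nonpos.2 (sq_nonneg ε)).trans zero_le_one
        rw [intervalIntegral.integral_of_le hle, intervalIntegral.integral_of_le hle]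
        exact integral_mono_of_nonneg
          (.of_forall fun t => setIntegral_nonneg measurableSet_closedBall fun x _ => by positivity)
          (((continuous_inv_sqrt_abs_add hε).const_mul _).integrableOn_Ioc)
          (.of_forall (hspatial ε hε))
    _ = 3 * V * ∫ t in (-ε ^ 2)..1, (√|t| + ε)⁻¹ := intervalIntegral.integral_const_mul _ _
    _ ≤ 3 * V * 3 := by gcongr; exact intervalIntegral_inv_sqrt_abs_add_le hε hε1
    _ = 9 * V := by ring
end

section
/- There exist constants c, C > 0 such that for all ε ∈ (0, 1/2], c · log(1/ε) ≤ ∫₀¹ ∫₀¹ r² / ((t^{1/2} + r)³ (t^{1/2} + r + ε)²) dr dt ≤ C · log(1/ε). -/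
/-! Write `s = √t`. Since `r² ≤ (s + r)²` and `s ≤ s + r`, the kernel is at most
`s⁻¹ (s + ε + r)⁻²`, so the inner integral is at most `1 / (s (s + ε))`; for `ε ≤ s ≤ r` the
kernel is at least `1 / (72 r³)`, so the inner integral is at least `(s⁻² - 1) / 144`.
In `t`, the bound `1 / (ε √t)` makes `[0, ε²]` contribute `O(1)`, while on `[ε², 1]` both bounds
are of order `1 / t`, whose integral is `2 log (1 / ε)`. -/

open MeasureTheory Real Set intervalIntegral

lemma integral_inv_pow_two_add {a b : ℝ} (ha : 0 < a) (hb : 0 ≤ b) :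
    ∫ r in (0 : ℝ)..b, ((a + r) ^ 2)⁻¹ = a⁻¹ - (a + b)⁻¹ := by
  have h0 : (0 : ℝ) ∉ uIcc a (a + b) := notMem_uIcc_of_lt ha (add_pos_of_pos_of_nonneg ha hb)
  have hz : ∀ x : ℝ, (x ^ 2)⁻¹ = x ^ (-2 : ℤ) := fun x => by simp [zpow_neg]
  rw [integral_comp_add_left (fun x => (x ^ 2)⁻¹) a, add_zero]
  simp only [hz]
  rw [integral_zpow (Or.inr ⟨by norm_num, h0⟩)]
  norm_num
  ring

lemma integral_inv_pow_three {a b : ℝ} (ha : 0 < a) (hab : a ≤ b) :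
    ∫ r in a..b, (r ^ 3)⁻¹ = ((a ^ 2)⁻¹ - (b ^ 2)⁻¹) / 2 := by
  have h0 : (0 : ℝ) ∉ uIcc a b := notMem_uIcc_of_lt ha (ha.trans_le hab)
  have hz : ∀ x : ℝ, (x ^ 3)⁻¹ = x ^ (-3 : ℤ) := fun x => by simp [zpow_neg]
  simp only [hz]
  rw [integral_zpow (Or.inr ⟨by norm_num, h0⟩)]
  norm_num
  ring

lemma integral_inv_from_sq {ε : ℝ} (hε : 0 < ε) :
    ∫ t in ε ^ 2..1, t⁻¹ = 2 * log (1 / ε) := by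
  rw [integral_inv_of_pos (by positivity) one_pos, ← one_div_pow, log_pow]
  norm_num

lemma intervalIntegrable_inv_from_sq {ε : ℝ} (hε : 0 < ε) :
    IntervalIntegrable (fun t : ℝ => t⁻¹) volume (ε ^ 2) 1 :=
  intervalIntegrable_inv_iff.2 (Or.inr (notMem_uIcc_of_lt (by positivity) one_pos))

/-- Both sides vanish for `t < 0`. -/
lemma inv_sqrt_eq_rpow : (fun t : ℝ => (√t)⁻¹) = fun t : ℝ => t ^ (-(1 / 2) : ℝ) := by
  funext t
  rcases le_or_gt 0 t with ht | ht
  · rw [sqrt_eq_rpow, ← rpow_neg ht]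
  · rw [sqrt_eq_zero_of_nonpos ht.le, rpow_def_of_neg ht,
      show (-(1 / 2) : ℝ) * π = -(π / 2) by ring, cos_neg, cos_pi_div_two, mul_zero, inv_zero]

lemma intervalIntegrable_inv_sqrt (b : ℝ) :
    IntervalIntegrable (fun t : ℝ => (√t)⁻¹) volume 0 b := by
  rw [inv_sqrt_eq_rpow]
  exact intervalIntegrable_rpow' (by norm_num)

lemma integral_inv_sqrt (b : ℝ) : ∫ t in (0 : ℝ)..b, (√t)⁻¹ = 2 * √b := by
  rw [inv_sqrt_eq_rpow, integral_rpow (Or.inl (by norm_num)),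
    show (-(1 / 2) : ℝ) + 1 = 1 / 2 by norm_num, zero_rpow (by norm_num), ← sqrt_eq_rpow]
  ring

noncomputable def radialKernel (ε s r : ℝ) : ℝ :=
  r ^ 2 / ((s + r) ^ 3 * (s + r + ε) ^ 2)

noncomputable def radialIntegral (ε s : ℝ) : ℝ :=
  ∫ r in (0 : ℝ)..1, radialKernel ε s r

section Kernel

variable {ε s : ℝ}

lemma radialKernel_nonneg (ε : ℝ) {r : ℝ} (hs : 0 ≤ s) (hr : 0 ≤ r) :
    0 ≤ radialKernel ε s r := by
  unfold radialKernel
  positivity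

lemma radialIntegral_nonneg (ε : ℝ) (hs : 0 ≤ s) : 0 ≤ radialIntegral ε s :=
  integral_nonneg zero_le_one fun _ hr => radialKernel_nonneg ε hs hr.1

lemma intervalIntegrable_radialKernel (hε : 0 ≤ ε) (hs : 0 < s) {a b : ℝ} (ha : 0 ≤ a)
    (hab : a ≤ b) : IntervalIntegrable (radialKernel ε s) volume a b := by
  refine ContinuousOn.intervalIntegrable_of_Icc hab
    (ContinuousOn.div (by fun_prop) (by fun_prop) fun r hr => ?_)
  have : 0 < s + r := by linarith [hr.1]
  positivity

lemma measurable_radialIntegral (ε : ℝ) : Measurable (radialIntegral ε) := by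
  have hK : StronglyMeasurable (Function.uncurry (radialKernel ε)) := by
    unfold radialKernel
    exact (Measurable.div (by fun_prop) (by fun_prop)).stronglyMeasurable
  have hI := hK.integral_prod_right' (ν := volume.restrict (Ioc (0 : ℝ) 1))
  have hIoc : radialIntegral ε = fun s => ∫ r in Ioc (0 : ℝ) 1, radialKernel ε s r :=
    funext fun _ => integral_of_le zero_le_one
  rw [hIoc]
  exact hI.measurable

lemma radialKernel_le (hε : 0 ≤ ε) (hs : 0 < s) {r : ℝ} (hr : 0 ≤ r) :
    radialKernel ε s r ≤ s⁻¹ * ((s + ε + r) ^ 2)⁻¹ := by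
  rw [← mul_inv, ← one_div, radialKernel, div_le_div_iff₀ (by positivity) (by positivity)]
  calc r ^ 2 * (s * (s + ε + r) ^ 2) ≤ (s + r) ^ 2 * ((s + r) * (s + ε + r) ^ 2) := by
        gcongr <;> linarith
    _ = 1 * ((s + r) ^ 3 * (s + r + ε) ^ 2) := by ring

lemma radialIntegral_le (hε : 0 ≤ ε) (hs : 0 < s) : radialIntegral ε s ≤ (s * (s + ε))⁻¹ := by
  have hsε : 0 < s + ε := by linarith
  have hbound : IntervalIntegrable (fun r => s⁻¹ * ((s + ε + r) ^ 2)⁻¹) volume 0 1 := by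
    refine ContinuousOn.intervalIntegrable
      (continuousOn_const.mul (ContinuousOn.inv₀ (by fun_prop) fun r hr => ?_))
    rw [uIcc_of_le zero_le_one] at hr
    have := hr.1
    positivity
  calc radialIntegral ε s ≤ ∫ r in (0 : ℝ)..1, s⁻¹ * ((s + ε + r) ^ 2)⁻¹ :=
        integral_mono_on zero_le_one (intervalIntegrable_radialKernel hε hs le_rfl zero_le_one)
          hbound fun r hr => radialKernel_le hε hs hr.1
    _ = s⁻¹ * ((s + ε)⁻¹ - (s + ε + 1)⁻¹) := by
        rw [intervalIntegral.integral_const_mul, integral_inv_pow_two_add hsε zero_le_one]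
    _ ≤ (s * (s + ε))⁻¹ := by
        rw [mul_inv]
        gcongr
        exact sub_le_self _ (by positivity)

lemma inv_pow_three_le_radialKernel (hε : 0 ≤ ε) (hs : 0 < s) {r : ℝ} (hεr : ε ≤ r)
    (hsr : s ≤ r) : (r ^ 3)⁻¹ / 72 ≤ radialKernel ε s r := by
  have hr : 0 < r := hs.trans_le hsr
  have hden : (s + r) ^ 3 * (s + r + ε) ^ 2 ≤ 72 * r ^ 5 := calc
    _ ≤ (2 * r) ^ 3 * (3 * r) ^ 2 := by gcongr <;> linarith
    _ = 72 * r ^ 5 := by ring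
  calc (r ^ 3)⁻¹ / 72 = r ^ 2 / (72 * r ^ 5) := by field_simp
    _ ≤ radialKernel ε s r := div_le_div_of_nonneg_left (by positivity) (by positivity) hden

lemma le_radialIntegral (hε : 0 ≤ ε) (hs : 0 < s) (hεs : ε ≤ s) (hs1 : s ≤ 1) :
    ((s ^ 2)⁻¹ - 1) / 144 ≤ radialIntegral ε s := by
  have hbound : IntervalIntegrable (fun r : ℝ => (r ^ 3)⁻¹ / 72) volume s 1 := by
    refine ContinuousOn.intervalIntegrable
      ((ContinuousOn.inv₀ (by fun_prop) fun r hr => ?_).div_const _)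
    rw [uIcc_of_le hs1] at hr
    have := hs.trans_le hr.1
    positivity
  calc ((s ^ 2)⁻¹ - 1) / 144 = ∫ r in s..1, (r ^ 3)⁻¹ / 72 := by
        rw [intervalIntegral.integral_div, integral_inv_pow_three hs hs1]
        ring
    _ ≤ ∫ r in s..1, radialKernel ε s r :=
        integral_mono_on hs1 hbound (intervalIntegrable_radialKernel hε hs hs.le hs1)
          fun r hr => inv_pow_three_le_radialKernel hε hs (hεs.trans hr.1) hr.1
    _ ≤ radialIntegral ε s :=
        integral_mono_interval hs.le hs1 le_rfl
          ((ae_restrict_mem measurableSet_Ioc).mono fun r hr =>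
            radialKernel_nonneg ε hs.le hr.1.le)
          (intervalIntegrable_radialKernel hε hs le_rfl zero_le_one)

end Kernel

section Outer

variable {ε : ℝ}

lemma radialIntegral_sqrt_le_inv_mul (hε : 0 < ε) {t : ℝ} (ht : 0 < t) :
    radialIntegral ε √t ≤ ε⁻¹ * (√t)⁻¹ := by
  have hs : 0 < √t := sqrt_pos.2 ht
  calc radialIntegral ε √t ≤ (√t * (√t + ε))⁻¹ := radialIntegral_le hε.le hs
    _ ≤ ε⁻¹ * (√t)⁻¹ := by
        rw [mul_inv, mul_comm]
        gcongr
        linarith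

lemma radialIntegral_sqrt_le_inv (hε : 0 ≤ ε) {t : ℝ} (ht : 0 < t) :
    radialIntegral ε √t ≤ t⁻¹ := by
  have hs : 0 < √t := sqrt_pos.2 ht
  calc radialIntegral ε √t ≤ (√t * (√t + ε))⁻¹ := radialIntegral_le hε hs
    _ ≤ (√t * √t)⁻¹ := by gcongr; linarith
    _ = t⁻¹ := by rw [mul_self_sqrt ht.le]

lemma intervalIntegrable_radialIntegral_sqrt (hε : 0 < ε) :
    IntervalIntegrable (fun t => radialIntegral ε √t) volume 0 1 := by
  rw [intervalIntegrable_iff_integrableOn_Ioc_of_le zero_le_one]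
  have hg := (intervalIntegrable_inv_sqrt 1).const_mul ε⁻¹
  rw [intervalIntegrable_iff_integrableOn_Ioc_of_le zero_le_one] at hg
  have hmeas := (measurable_radialIntegral ε).comp continuous_sqrt.measurable
  refine hg.mono' hmeas.aestronglyMeasurable
    ((ae_restrict_mem measurableSet_Ioc).mono fun t ht => ?_)
  rw [norm_of_nonneg (radialIntegral_nonneg ε (sqrt_nonneg t))]
  exact radialIntegral_sqrt_le_inv_mul hε ht.1

lemma integral_radialIntegral_sqrt_le (hε : 0 < ε) (hε1 : ε ≤ 1) :
    ∫ t in (0 : ℝ)..1, radialIntegral ε √t ≤ 2 + 2 * log (1 / ε) := by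
  have hε2 : 0 < ε ^ 2 := by positivity
  have hmem : ε ^ 2 ∈ uIcc (0 : ℝ) 1 := mem_uIcc_of_le hε2.le (pow_le_one₀ hε.le hε1)
  have hI := intervalIntegrable_radialIntegral_sqrt hε
  have hI₁ := hI.mono_set (uIcc_subset_uIcc_left hmem)
  have hI₂ := hI.mono_set (uIcc_subset_uIcc_right hmem)
  have near : ∫ t in (0 : ℝ)..ε ^ 2, radialIntegral ε √t ≤ 2 := calc
    _ ≤ ∫ t in (0 : ℝ)..ε ^ 2, ε⁻¹ * (√t)⁻¹ :=
        integral_mono_on_of_le_Ioo hε2.le hI₁ ((intervalIntegrable_inv_sqrt _).const_mul _)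
          fun t ht => radialIntegral_sqrt_le_inv_mul hε ht.1
    _ = 2 := by
        rw [intervalIntegral.integral_const_mul, integral_inv_sqrt, sqrt_sq hε.le]
        field_simp
  have far : ∫ t in ε ^ 2..1, radialIntegral ε √t ≤ 2 * log (1 / ε) := calc
    _ ≤ ∫ t in ε ^ 2..1, t⁻¹ :=
        integral_mono_on (pow_le_one₀ hε.le hε1) hI₂ (intervalIntegrable_inv_from_sq hε)
          fun t ht => radialIntegral_sqrt_le_inv hε.le (hε2.trans_le ht.1)
    _ = 2 * log (1 / ε) := integral_inv_from_sq hε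
  rw [← integral_add_adjacent_intervals hI₁ hI₂]
  linarith

lemma le_integral_radialIntegral_sqrt (hε : 0 < ε) (hε1 : ε ≤ 1) :
    (2 * log (1 / ε) - 1) / 144 ≤ ∫ t in (0 : ℝ)..1, radialIntegral ε √t := by
  have hε2 : 0 < ε ^ 2 := by positivity
  have hε21 : ε ^ 2 ≤ 1 := pow_le_one₀ hε.le hε1
  have hI := intervalIntegrable_radialIntegral_sqrt hε
  have hinv := intervalIntegrable_inv_from_sq hε
  calc (2 * log (1 / ε) - 1) / 144 ≤ ∫ t in ε ^ 2..1, (t⁻¹ - 1) / 144 := by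
        rw [intervalIntegral.integral_div, integral_sub hinv intervalIntegrable_const,
          integral_inv_from_sq hε, intervalIntegral.integral_const, smul_eq_mul, mul_one]
        linarith
    _ ≤ ∫ t in ε ^ 2..1, radialIntegral ε √t := by
        refine integral_mono_on hε21 ((hinv.sub intervalIntegrable_const).div_const _)
          (hI.mono_set (uIcc_subset_uIcc_right (mem_uIcc_of_le hε2.le hε21))) fun t ht => ?_
        have ht0 : 0 < t := hε2.trans_le ht.1
        have hεt : ε ≤ √t := by simpa [sqrt_sq hε.le] using sqrt_le_sqrt ht.1
        simpa [sq_sqrt ht0.le] using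
          le_radialIntegral hε.le (sqrt_pos.2 ht0) hεt (sqrt_le_one.2 ht.2)
    _ ≤ ∫ t in (0 : ℝ)..1, radialIntegral ε √t :=
        integral_mono_interval hε2.le hε21 le_rfl
          ((ae_restrict_mem measurableSet_Ioc).mono fun t _ =>
            radialIntegral_nonneg ε (sqrt_nonneg t))
          hI

end Outer

/-- Two-sided logarithmic divergence:
`∫₀¹∫₀¹ r²/((t^{1/2}+r)³(t^{1/2}+r+ε)²) dr dt ≍ log(1/ε)` for `ε ∈ (0,1/2]`. -/
theorem stmt10 :
    ∃ c C : ℝ, 0 < c ∧ 0 < C ∧ ∀ ε : ℝ, 0 < ε → ε ≤ 1 / 2 →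
      c * Real.log (1 / ε)
          ≤ (∫ t in (0 : ℝ)..1, ∫ r in (0 : ℝ)..1,
              r ^ 2 / ((Real.sqrt t + r) ^ 3 * (Real.sqrt t + r + ε) ^ 2)) ∧
      (∫ t in (0 : ℝ)..1, ∫ r in (0 : ℝ)..1,
              r ^ 2 / ((Real.sqrt t + r) ^ 3 * (Real.sqrt t + r + ε) ^ 2))
          ≤ C * Real.log (1 / ε) := by
  refine ⟨1 / 288, 5, by norm_num, by norm_num, fun ε hε hε2 => ?_⟩
  have hlog : 2 / 3 < log (1 / ε) := by
    have : log 2 ≤ log (1 / ε) := log_le_log two_pos (by rw [le_div_iff₀ hε]; linarith)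
    linarith [log_two_gt_d9]
  have hlow := le_integral_radialIntegral_sqrt hε (by linarith)
  have hup := integral_radialIntegral_sqrt_le hε (by linarith)
  simp only [radialIntegral, radialKernel] at hlow hup
  exact ⟨by linarith, by linarith⟩
end

section
/- There exists a constant C such that for all ε ∈ (0,1], ∫₀¹ ∫₀¹ r² / ((t^{1/2} + r)³ (t^{1/2} + r + ε)) dr dt ≤ C. -/
open MeasureTheory intervalIntegral

/-- Uniform boundedness of the mixed integral:
`∫₀¹∫₀¹ r²/((t^{1/2}+r)³(t^{1/2}+r+ε)) dr dt ≤ C` uniformly in `ε ∈ (0,1]`. -/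
theorem stmt11 :
    ∃ C : ℝ, 0 < C ∧ ∀ ε : ℝ, 0 < ε → ε ≤ 1 →
      (∫ t in (0 : ℝ)..1, ∫ r in (0 : ℝ)..1,
          r ^ 2 / ((Real.sqrt t + r) ^ 3 * (Real.sqrt t + r + ε))) ≤ C := by
  refine ⟨2, by norm_num, ?_⟩
  intro ε hε hε1
  have key : ∀ t ∈ Set.Ioc (0:ℝ) 1,
      (∫ r in (0:ℝ)..1, r ^ 2 / ((Real.sqrt t + r) ^ 3 * (Real.sqrt t + r + ε)))
        ≤ (Real.sqrt t)⁻¹ := by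
    intro t ht
    set a := Real.sqrt t with ha
    have ha0 : 0 < a := Real.sqrt_pos.mpr ht.1
    have hmem : ∀ x ∈ Set.uIcc (0:ℝ) 1, (0:ℝ) ≤ x := by
      intro x hx
      rw [Set.uIcc_of_le (by norm_num)] at hx
      exact hx.1
    have hint2 : IntervalIntegrable (fun r : ℝ => (a + r) ^ (-2 : ℤ)) volume 0 1 := by
      apply ContinuousOn.intervalIntegrable
      apply ContinuousOn.zpow₀ (by fun_prop)
      intro x hx
      have := hmem x hx
      exact Or.inl (by positivity)
    have hint1 : IntervalIntegrable
        (fun r : ℝ => r ^ 2 / ((a + r) ^ 3 * (a + r + ε))) volume 0 1 := by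
      apply ContinuousOn.intervalIntegrable
      apply ContinuousOn.div (by fun_prop) (by fun_prop)
      intro x hx
      have := hmem x hx
      positivity
    have hpt : ∀ x ∈ Set.Icc (0:ℝ) 1,
        x ^ 2 / ((a + x) ^ 3 * (a + x + ε)) ≤ (a + x) ^ (-2 : ℤ) := by
      intro x hx
      have hx0 : 0 ≤ x := hx.1
      have hax : 0 < a + x := by linarith
      have h1 : x ^ 2 ≤ (a + x) ^ 2 := by nlinarith
      have h2 : (a + x) ^ 4 ≤ (a + x) ^ 3 * (a + x + ε) := by nlinarith [pow_pos hax 3]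
      calc x ^ 2 / ((a + x) ^ 3 * (a + x + ε)) ≤ (a + x) ^ 2 / (a + x) ^ 4 :=
            div_le_div₀ (by positivity) h1 (by positivity) h2
        _ = (a + x) ^ (-2 : ℤ) := by
            have hne : a + x ≠ 0 := ne_of_gt hax
            rw [zpow_neg]
            rw [show ((a + x) ^ (2:ℤ)) = (a + x) ^ (2:ℕ) from zpow_natCast _ 2]
            field_simp
    have hcalc : ∫ r in (0:ℝ)..1, (a + r) ^ (-2 : ℤ) = a⁻¹ - (a + 1)⁻¹ := by
      rw [intervalIntegral.integral_comp_add_left (fun x => x ^ (-2:ℤ)) a,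
        integral_zpow (Or.inr ⟨by norm_num, by
          rw [Set.uIcc_of_le (by linarith)]
          intro h
          have := h.1
          linarith⟩)]
      norm_num
      ring
    have := intervalIntegral.integral_mono_on (by norm_num) hint1 hint2 hpt
    rw [hcalc] at this
    have h3 : (0:ℝ) ≤ (a + 1)⁻¹ := by positivity
    linarith
  have hrpow : IntervalIntegrable (fun t : ℝ => t ^ (-(1/2) : ℝ)) volume 0 1 :=
    intervalIntegral.intervalIntegrable_rpow' (by norm_num)
  have hval : ∫ t in (0:ℝ)..1, t ^ (-(1/2):ℝ) = 2 := by
    rw [integral_rpow (Or.inl (by norm_num))]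
    norm_num [Real.zero_rpow, Real.one_rpow]
  calc (∫ t in (0 : ℝ)..1, ∫ r in (0 : ℝ)..1,
          r ^ 2 / ((Real.sqrt t + r) ^ 3 * (Real.sqrt t + r + ε)))
      = ∫ t in Set.Ioc (0:ℝ) 1, ∫ r in (0 : ℝ)..1,
          r ^ 2 / ((Real.sqrt t + r) ^ 3 * (Real.sqrt t + r + ε)) :=
        intervalIntegral.integral_of_le (by norm_num)
    _ ≤ ∫ t in Set.Ioc (0:ℝ) 1, t ^ (-(1/2):ℝ) := by
        apply integral_mono_of_nonneg
        · filter_upwards with t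
          apply intervalIntegral.integral_nonneg (by norm_num)
          intro x hx
          have hx0 : (0:ℝ) ≤ x := hx.1
          have h1 : (0:ℝ) ≤ Real.sqrt t + x := add_nonneg (Real.sqrt_nonneg t) hx0
          exact div_nonneg (by positivity) (mul_nonneg (pow_nonneg h1 3) (by linarith))
        · exact (intervalIntegrable_iff_integrableOn_Ioc_of_le (by norm_num)).mp hrpow
        · filter_upwards [ae_restrict_mem measurableSet_Ioc] with t ht
          calc (∫ r in (0 : ℝ)..1,
                r ^ 2 / ((Real.sqrt t + r) ^ 3 * (Real.sqrt t + r + ε)))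
              ≤ (Real.sqrt t)⁻¹ := key t ht
            _ = t ^ (-(1/2):ℝ) := by
                rw [Real.sqrt_eq_rpow, ← Real.rpow_neg ht.1.le]
    _ = ∫ t in (0:ℝ)..1, t ^ (-(1/2):ℝ) :=
        (intervalIntegral.integral_of_le (by norm_num)).symm
    _ = 2 := hval
end
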